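/- arXiv:2201.11033 — 4 statements merged into one kernel-verified Lean document; each statement's English description precedes it below -/
import Mathlib

section
/- Every constructible right ideal of the monoid T equals ∅, or tT for some t ∈ T, or ⋃_{n ∈ ℤ} t·x_n·T ∪ ⋃_{n ∈ ℤ} t·y_n·T for some t ∈ T; conversely all sets of these forms are constructible right ideals of T. -/
/-- The alphabet of the monoid `T`: letters `a`, `b`, `c` and `x n`, `y n` for `n : ℤ`. -/
inductive TGen : Type
  | a : TGen
  | b : TGen
  | c : TGen
  | x : ℤ → TGen
  | y : ℤ → TGen
  deriving DecidableEq

/-- The defining relations of `T`: `a·b·x n = b·x n`, `a·b·y n = b·y (n+1)`,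
`c·b·x n = b·x (n+1)` and `c·b·y n = b·y n` for `n ∈ ℤ`. -/
inductive TRel : FreeMonoid TGen → FreeMonoid TGen → Prop
  | axr (n : ℤ) : TRel (.of .a * .of .b * .of (.x n)) (.of .b * .of (.x n))
  | ayr (n : ℤ) : TRel (.of .a * .of .b * .of (.y n)) (.of .b * .of (.y (n + 1)))
  | cxr (n : ℤ) : TRel (.of .c * .of .b * .of (.x n)) (.of .b * .of (.x (n + 1)))
  | cyr (n : ℤ) : TRel (.of .c * .of .b * .of (.y n)) (.of .b * .of (.y n))

/-- The monoid `T` presented by the generators `TGen` and the relations `TRel`. -/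
abbrev T : Type := PresentedMonoid TRel

/-- The images of the generators in `T`. -/
def gen (g : TGen) : T := PresentedMonoid.of TRel g

/-- The principal right ideal `sM` of a monoid. -/
def rIdeal {M : Type*} [Monoid M] (s : M) : Set M := {m | ∃ u, m = s * u}

/-- The constructible right ideals of a monoid `M`: the smallest family of subsets of `M`
containing `M` itself and closed under the operations `X ↦ tX` and `X ↦ t⁻¹X = {m | t·m ∈ X}`
for every `t ∈ M`. -/
inductive IsConstructible (M : Type*) [Monoid M] : Set M → Prop
  | univ : IsConstructible M Set.univ
  | mul (t : M) {X : Set M} : IsConstructible M X → IsConstructible M ((t * ·) '' X)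
  | preimage (t : M) {X : Set M} : IsConstructible M X → IsConstructible M {m | t * m ∈ X}

/-!
Words without a factor `a b xₙ`, `a b yₙ`, `c b xₙ`, `c b yₙ` are normal forms for `T`, and `T`
acts on them by left multiplication (`consNF`). Reading off the first letters of normal forms
shows that `T` is left cancellative, that two distinct generators have common right multiples
only in `bJ`, where `J = ⋃ₙ xₙT ∪ ⋃ₙ yₙT` (`xyIdeal`), and that `a` and `c` permute `bJ` by
shifting the index of `yₙ`, resp. `xₙ`.

Let `𝒮` (`IsStdIdeal`) be the smallest family containing `∅`, `T`, `J` and closed under left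
multiplication by generators. For generators `g ≠ h` we get `g⁻¹(hY) = g⁻¹(hY ∩ bJ)`, and by
induction on `Y ∈ 𝒮` the set `Y ∩ bJ` is `∅`, `bJ`, `b xₙ Z` or `b yₙ Z` with `Z ∈ 𝒮`; the
preimages of these under generators are again in `𝒮`. So `𝒮` contains every constructible ideal,
and conversely the members of `𝒮` are constructible because `J = b⁻¹(aT)` and `∅ = x₀⁻¹(bT)`.
-/

open Set Pointwise

theorem IsConstructible.induction_of_closure_eq_top {M : Type*} [Monoid M] {S : Set M}
    (hS : Submonoid.closure S = ⊤) {p : Set M → Prop} (h_univ : p Set.univ)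
    (h_smul : ∀ s ∈ S, ∀ X, p X → p (s • X))
    (h_preimage : ∀ s ∈ S, ∀ X, p X → p ((s * ·) ⁻¹' X)) {X : Set M}
    (hX : IsConstructible M X) : p X := by
  have mem (t : M) : t ∈ Submonoid.closure S := hS ▸ Submonoid.mem_top t
  have smul (t : M) : ∀ X, p X → p (t • X) := by
    induction mem t using Submonoid.closure_induction with
    | mem s hs => exact h_smul s hs
    | one => simp
    | mul s t _ _ hs ht => intro X hX; rw [mul_smul]; exact hs _ (ht _ hX)
  have preimage (t : M) : ∀ X, p X → p ((t * ·) ⁻¹' X) := by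
    induction mem t using Submonoid.closure_induction with
    | mem s hs => exact h_preimage s hs
    | one => simp
    | mul s t _ _ hs ht =>
        intro X hX
        have : ((s * t) * ·) ⁻¹' X = (t * ·) ⁻¹' ((s * ·) ⁻¹' X) := by
          ext; simp [mul_assoc]
        rw [this]
        exact ht _ (hs _ hX)
  induction hX with
  | univ => exact h_univ
  | mul t _ ih => exact smul t _ ih
  | preimage t _ ih => exact preimage t _ ih

theorem Set.preimage_mul_left_smul_set {M : Type*} [Monoid M] [IsLeftCancelMul M] (t : M)
    (X : Set M) : (t * ·) ⁻¹' (t • X) = X :=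
  preimage_image_eq X (mul_right_injective t)

namespace TGen

inductive IsXY : TGen → Prop
  | x (n : ℤ) : IsXY (x n)
  | y (n : ℤ) : IsXY (y n)

lemma eq_b_or_eq_a_or_eq_c_or_isXY (g : TGen) : g = b ∨ (g = a ∨ g = c) ∨ g.IsXY := by
  cases g
  exacts [Or.inr (Or.inl (Or.inl rfl)), Or.inl rfl, Or.inr (Or.inl (Or.inr rfl)),
    Or.inr (Or.inr (.x _)), Or.inr (Or.inr (.y _))]

def shift : TGen → TGen → TGen
  | a, y n => y (n + 1)
  | c, x n => x (n + 1)
  | _, z => z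

lemma IsXY.shift {z : TGen} (hz : z.IsXY) (h : TGen) : (shift h z).IsXY := by
  cases hz <;> cases h <;> constructor

lemma shift_injective (h : TGen) : Function.Injective (shift h) := by
  intro z w e
  cases h <;> cases z <;> cases w <;> simp_all [shift]

lemma exists_shift_eq {h z : TGen} (hh : h = a ∨ h = c) (hz : z.IsXY) :
    ∃ z₀, z₀.IsXY ∧ shift h z₀ = z := by
  rcases hh with rfl | rfl <;> cases hz with
  | x n => first | exact ⟨x n, .x n, rfl⟩ | exact ⟨x (n - 1), .x _, by simp [shift]⟩
  | y n => first | exact ⟨y n, .y n, rfl⟩ | exact ⟨y (n - 1), .y _, by simp [shift]⟩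

/-- The normal form of `g w` for a normal word `w`, the normal words being those without a factor
`a b xₙ`, `a b yₙ`, `c b xₙ`, `c b yₙ`. -/
def consNF : TGen → List TGen → List TGen
  | a, b :: x n :: r => b :: x n :: r
  | a, b :: y n :: r => b :: y (n + 1) :: r
  | c, b :: x n :: r => b :: x (n + 1) :: r
  | c, b :: y n :: r => b :: y n :: r
  | g, v => g :: v

lemma IsXY.consNF {z : TGen} (hz : z.IsXY) (v : List TGen) : consNF z v = z :: v := by
  cases hz <;> rfl

lemma consNF_eq (g : TGen) (v : List TGen) :
    consNF g v = g :: v ∨ (g = a ∨ g = c) ∧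
      ∃ z r, z.IsXY ∧ v = b :: z :: r ∧ consNF g v = b :: shift g z :: r := by
  rcases v with _ | ⟨_ | _ | _ | n | n, _ | ⟨_ | _ | _ | k | k, r⟩⟩ <;> cases g <;>
    first
      | exact Or.inl rfl
      | exact Or.inr ⟨by simp, _, r, .x k, rfl, rfl⟩
      | exact Or.inr ⟨by simp, _, r, .y k, rfl, rfl⟩

lemma consNF_injective (g : TGen) : Function.Injective (consNF g) := by
  intro v w e
  rcases consNF_eq g v with hv | ⟨hg, z, r, -, rfl, hv⟩ <;>
    rcases consNF_eq g w with hw | ⟨hg, z', r', -, rfl, hw⟩ <;> rw [hv, hw] at e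
  · exact List.cons_injective e
  · rcases hg with rfl | rfl <;> simp at e
  · rcases hg with rfl | rfl <;> simp at e
  · simp only [List.cons.injEq, true_and] at e
    rw [shift_injective g e.1, e.2]

end TGen

namespace T

open TGen

lemma induction_on {p : T → Prop} (m : T) (one : p 1)
    (gen_mul : ∀ g m, p m → p (gen g * m)) : p m := by
  induction (PresentedMonoid.closure_range_of TRel ▸ Submonoid.mem_top m :
      m ∈ Submonoid.closure (range gen)) using Submonoid.closure_induction_left with
  | one => exact one
  | mul_left _ hg m _ ih => obtain ⟨g, rfl⟩ := hg; exact gen_mul g m ih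

lemma gen_mul_gen_b_mul_gen {h z : TGen} (hh : h = a ∨ h = c) (hz : z.IsXY) :
    gen h * gen b * gen z = gen b * gen (shift h z) := by
  rcases hh with rfl | rfl <;> cases hz with
  | x n => first | exact PresentedMonoid.mk_eq_mk_of_rel (TRel.axr n)
                 | exact PresentedMonoid.mk_eq_mk_of_rel (TRel.cxr n)
  | y n => first | exact PresentedMonoid.mk_eq_mk_of_rel (TRel.ayr n)
                 | exact PresentedMonoid.mk_eq_mk_of_rel (TRel.cyr n)

def ofWord (l : List TGen) : T := (l.map gen).prod

lemma ofWord_consNF (g : TGen) (v : List TGen) : ofWord (consNF g v) = gen g * ofWord v := by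
  rcases consNF_eq g v with h | ⟨hg, z, r, hz, rfl, h⟩ <;>
    simp only [h, ofWord, List.map_cons, List.prod_cons, ← mul_assoc]
  rw [gen_mul_gen_b_mul_gen hg hz]

def act : T →* Function.End (List TGen) :=
  PresentedMonoid.lift (M := Function.End (List TGen)) consNF fun _ _ h => by cases h <;> rfl

def nf (m : T) : List TGen := act m []

lemma nf_gen_mul (g : TGen) (m : T) : nf (gen g * m) = consNF g (nf m) := by
  simp only [nf, map_mul]
  rfl

lemma ofWord_act (m : T) (v : List TGen) : ofWord (act m v) = m * ofWord v := by
  induction m using induction_on with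
  | one => rw [map_one, one_mul]; rfl
  | gen_mul g m ih =>
      rw [map_mul]
      change ofWord (consNF g (act m v)) = _
      rw [ofWord_consNF, ih, mul_assoc]

lemma ofWord_nf (m : T) : ofWord (nf m) = m :=
  (ofWord_act m []).trans (mul_one m)

instance : IsLeftCancelMul T where
  mul_left_cancel t := by
    induction t using induction_on with
    | one => intro u v h; simpa using h
    | gen_mul g t ih =>
        intro u v (h : gen g * t * u = gen g * t * v)
        apply ih
        show t * u = t * v
        rw [mul_assoc, mul_assoc] at h
        have e := congrArg nf h
        rw [nf_gen_mul, nf_gen_mul] at e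
        rw [← ofWord_nf (t * u), ← ofWord_nf (t * v), consNF_injective g e]

def xyIdeal : Set T := {m | ∃ z u, z.IsXY ∧ m = gen z * u}

lemma mem_b_smul_xyIdeal_iff {m : T} :
    m ∈ gen b • xyIdeal ↔ ∃ z r, z.IsXY ∧ nf m = b :: z :: r := by
  constructor
  · rintro ⟨_, ⟨z, u, hz, rfl⟩, rfl⟩
    refine ⟨z, nf u, hz, ?_⟩
    change nf (gen b * (gen z * u)) = _
    rw [nf_gen_mul, nf_gen_mul, hz.consNF]
    rfl
  · rintro ⟨z, r, hz, hm⟩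
    refine ⟨gen z * ofWord r, ⟨z, _, hz, rfl⟩, ?_⟩
    rw [← ofWord_nf m, hm]
    rfl

lemma gen_mul_mem_b_smul_xyIdeal {g h : TGen} {u v : T} (hgh : g ≠ h)
    (e : gen g * u = gen h * v) : gen g * u ∈ gen b • xyIdeal := by
  have e' := congrArg nf e
  rw [nf_gen_mul, nf_gen_mul] at e'
  rw [mem_b_smul_xyIdeal_iff, nf_gen_mul]
  rcases consNF_eq g (nf u) with hg | ⟨-, z, r, hz, -, hg⟩
  · rcases consNF_eq h (nf v) with hh | ⟨-, z, r, hz, -, hh⟩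
    · rw [hg, hh] at e'
      exact absurd (List.cons.inj e').1 hgh
    · exact ⟨_, r, hz.shift h, e'.trans hh⟩
  · exact ⟨_, r, hz.shift g, hg⟩

lemma eq_of_gen_mul_eq_gen_mul {z g : TGen} {u v : T} (hz : z.IsXY)
    (e : gen z * u = gen g * v) : z = g := by
  have e' := congrArg nf e
  rw [nf_gen_mul, nf_gen_mul, hz.consNF] at e'
  rcases consNF_eq g (nf v) with hg | ⟨-, _, _, -, -, hg⟩ <;> rw [hg] at e'
  · exact (List.cons.inj e').1
  · cases hz <;> simp at e'

lemma gen_mul_ne_b_mul {z : TGen} (hz : z.IsXY) (u v : T) : gen z * u ≠ gen b * v := fun e => by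
  cases eq_of_gen_mul_eq_gen_mul hz e
  cases hz

lemma gen_mul_notMem_xyIdeal {g : TGen} (hg : ¬ g.IsXY) (u : T) : gen g * u ∉ xyIdeal := by
  rintro ⟨z, v, hz, e⟩
  exact hg (eq_of_gen_mul_eq_gen_mul hz e.symm ▸ hz)

lemma preimage_b_smul_xyIdeal {h : TGen} (hh : h = a ∨ h = c) :
    (gen h * ·) ⁻¹' (gen b • xyIdeal) = gen b • xyIdeal := by
  ext m
  simp only [mem_preimage]
  constructor
  · intro hm
    obtain ⟨z, r, hz, e⟩ := mem_b_smul_xyIdeal_iff.1 hm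
    rw [nf_gen_mul] at e
    rcases consNF_eq h (nf m) with hc | ⟨-, z₀, r₀, hz₀, hm', -⟩
    · rw [hc] at e
      rcases hh with rfl | rfl <;> simp at e
    · exact mem_b_smul_xyIdeal_iff.2 ⟨z₀, r₀, hz₀, hm'⟩
  · rintro ⟨_, ⟨z, u, hz, rfl⟩, rfl⟩
    refine ⟨gen (shift h z) * u, ⟨_, u, hz.shift h, rfl⟩, ?_⟩
    simp only [smul_eq_mul, ← mul_assoc, gen_mul_gen_b_mul_gen hh hz]

lemma smul_b_smul_xyIdeal {h : TGen} (hh : h = a ∨ h = c) :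
    gen h • gen b • xyIdeal = gen b • xyIdeal := by
  refine (smul_set_subset_iff.2 fun m hm => ?_).antisymm ?_
  · rwa [← preimage_b_smul_xyIdeal hh] at hm
  · rintro _ ⟨_, ⟨z, u, hz, rfl⟩, rfl⟩
    obtain ⟨z₀, hz₀, rfl⟩ := exists_shift_eq hh hz
    refine ⟨gen b * (gen z₀ * u), ⟨_, ⟨z₀, u, hz₀, rfl⟩, rfl⟩, ?_⟩
    simp only [smul_eq_mul, ← mul_assoc, gen_mul_gen_b_mul_gen hh hz₀]

inductive IsStdIdeal : Set T → Prop
  | empty : IsStdIdeal ∅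
  | univ : IsStdIdeal univ
  | xy : IsStdIdeal xyIdeal
  | smul (g : TGen) {X : Set T} : IsStdIdeal X → IsStdIdeal (gen g • X)

inductive IsXYStdIdeal : Set T → Prop
  | empty : IsXYStdIdeal ∅
  | xy : IsXYStdIdeal xyIdeal
  | smul {z : TGen} (hz : z.IsXY) {Z : Set T} : IsStdIdeal Z → IsXYStdIdeal (gen z • Z)

lemma IsXYStdIdeal.isStdIdeal {V : Set T} : IsXYStdIdeal V → IsStdIdeal V
  | .empty => .empty
  | .xy => .xy
  | .smul (z := z) _ hZ => .smul z hZ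

lemma IsStdIdeal.isXYStdIdeal_inter_xyIdeal {Y : Set T} (hY : IsStdIdeal Y) :
    IsXYStdIdeal (Y ∩ xyIdeal) := by
  cases hY with
  | empty => simpa using IsXYStdIdeal.empty
  | univ => simpa using IsXYStdIdeal.xy
  | xy => simpa using IsXYStdIdeal.xy
  | @smul g Y hY =>
      by_cases hg : g.IsXY
      · have : gen g • Y ⊆ xyIdeal := smul_set_subset_iff.2 fun u _ => ⟨g, u, hg, rfl⟩
        rw [inter_eq_left.2 this]
        exact .smul hg hY
      · rw [(disjoint_iff_inter_eq_empty.1 (Set.disjoint_left.2 ?_))]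
        · exact .empty
        · rintro _ ⟨u, -, rfl⟩
          exact gen_mul_notMem_xyIdeal hg u

lemma IsXYStdIdeal.smul_b_smul {h : TGen} (hh : h = a ∨ h = c) {V : Set T}
    (hV : IsXYStdIdeal V) : ∃ V', IsXYStdIdeal V' ∧ gen h • gen b • V = gen b • V' := by
  cases hV with
  | empty => exact ⟨∅, .empty, by simp⟩
  | xy => exact ⟨xyIdeal, .xy, smul_b_smul_xyIdeal hh⟩
  | smul hz hZ =>
      refine ⟨_, .smul (hz.shift h) hZ, ?_⟩
      simp only [smul_smul, ← mul_assoc, gen_mul_gen_b_mul_gen hh hz]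

lemma IsXYStdIdeal.exists_smul_b_smul_eq {h : TGen} (hh : h = a ∨ h = c) {V' : Set T}
    (hV' : IsXYStdIdeal V') : ∃ V, IsXYStdIdeal V ∧ gen h • gen b • V = gen b • V' := by
  cases hV' with
  | empty => exact ⟨∅, .empty, by simp⟩
  | xy => exact ⟨xyIdeal, .xy, smul_b_smul_xyIdeal hh⟩
  | smul hz hZ =>
      obtain ⟨z₀, hz₀, rfl⟩ := exists_shift_eq hh hz
      refine ⟨_, .smul hz₀ hZ, ?_⟩
      simp only [smul_smul, ← mul_assoc, gen_mul_gen_b_mul_gen hh hz₀]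

lemma IsStdIdeal.exists_inter_b_smul_xyIdeal {Y : Set T} (hY : IsStdIdeal Y) :
    ∃ V, IsXYStdIdeal V ∧ Y ∩ gen b • xyIdeal = gen b • V := by
  induction hY with
  | empty => exact ⟨∅, .empty, by simp⟩
  | univ => exact ⟨xyIdeal, .xy, univ_inter _⟩
  | xy =>
      refine ⟨∅, .empty, ?_⟩
      rw [smul_set_empty, ← disjoint_iff_inter_eq_empty, Set.disjoint_left]
      rintro _ ⟨z, u, hz, rfl⟩ ⟨v, -, e⟩
      exact gen_mul_ne_b_mul hz u v e.symm
  | @smul g Y hY ih =>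
      rcases g.eq_b_or_eq_a_or_eq_c_or_isXY with rfl | hg | hg
      · exact ⟨_, hY.isXYStdIdeal_inter_xyIdeal, (image_inter (mul_right_injective _)).symm⟩
      · obtain ⟨V, hV, e⟩ := ih
        obtain ⟨V', hV', e'⟩ := hV.smul_b_smul hg
        refine ⟨V', hV', ?_⟩
        have h := image_inter_preimage (gen g * ·) Y (gen b • xyIdeal)
        rw [preimage_b_smul_xyIdeal hg] at h
        rw [← e', ← e]
        exact h.symm
      · refine ⟨∅, .empty, ?_⟩
        rw [smul_set_empty, ← disjoint_iff_inter_eq_empty, Set.disjoint_left]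
        rintro _ ⟨u, -, rfl⟩ ⟨v, -, e⟩
        exact gen_mul_ne_b_mul hg u v e.symm

lemma IsXYStdIdeal.isStdIdeal_preimage_b_smul {V : Set T} (hV : IsXYStdIdeal V) (g : TGen) :
    IsStdIdeal ((gen g * ·) ⁻¹' (gen b • V)) := by
  rcases g.eq_b_or_eq_a_or_eq_c_or_isXY with rfl | hg | hg
  · rw [preimage_mul_left_smul_set]
    exact hV.isStdIdeal
  · obtain ⟨V₀, hV₀, e⟩ := hV.exists_smul_b_smul_eq hg
    rw [← e, preimage_mul_left_smul_set]
    exact .smul b hV₀.isStdIdeal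
  · convert IsStdIdeal.empty
    refine eq_empty_of_forall_notMem ?_
    rintro u ⟨v, -, e⟩
    exact gen_mul_ne_b_mul hg u v e.symm

lemma IsStdIdeal.preimage_gen_mul {X : Set T} (hX : IsStdIdeal X) (g : TGen) :
    IsStdIdeal ((gen g * ·) ⁻¹' X) := by
  cases hX with
  | empty => exact .empty
  | univ => exact .univ
  | xy =>
      by_cases hg : g.IsXY
      · convert IsStdIdeal.univ
        exact eq_univ_of_forall fun u => ⟨g, u, hg, rfl⟩
      · convert IsStdIdeal.empty
        exact eq_empty_of_forall_notMem (gen_mul_notMem_xyIdeal hg)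
  | @smul h Y hY =>
      by_cases hgh : g = h
      · subst hgh
        rwa [preimage_mul_left_smul_set]
      · obtain ⟨V, hV, e⟩ := (IsStdIdeal.smul h hY).exists_inter_b_smul_xyIdeal
        have hbJ : (gen g * ·) ⁻¹' (gen h • Y) =
            (gen g * ·) ⁻¹' (gen h • Y ∩ gen b • xyIdeal) := by
          ext u
          refine ⟨fun hu => ⟨hu, ?_⟩, fun hu => hu.1⟩
          obtain ⟨v, -, e⟩ := hu
          exact gen_mul_mem_b_smul_xyIdeal hgh e.symm
        rw [hbJ, e]
        exact hV.isStdIdeal_preimage_b_smul g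

lemma isStdIdeal_of_isConstructible {X : Set T} (hX : IsConstructible T X) : IsStdIdeal X :=
  hX.induction_of_closure_eq_top (PresentedMonoid.closure_range_of TRel) .univ
    (by rintro _ ⟨g, rfl⟩ X hX; exact .smul g hX)
    (by rintro _ ⟨g, rfl⟩ X hX; exact hX.preimage_gen_mul g)

lemma IsStdIdeal.eq_empty_or_exists {X : Set T} (hX : IsStdIdeal X) :
    X = ∅ ∨ ∃ t : T, X = t • Set.univ ∨ X = t • xyIdeal := by
  induction hX with
  | empty => exact Or.inl rfl
  | univ => exact Or.inr ⟨1, Or.inl (one_smul _ _).symm⟩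
  | xy => exact Or.inr ⟨1, Or.inr (one_smul _ _).symm⟩
  | smul g _ ih =>
      rcases ih with rfl | ⟨t, rfl | rfl⟩
      · exact Or.inl smul_set_empty
      · exact Or.inr ⟨gen g * t, Or.inl (mul_smul _ _ _).symm⟩
      · exact Or.inr ⟨gen g * t, Or.inr (mul_smul _ _ _).symm⟩

lemma preimage_b_mul_a_smul_univ : (gen b * ·) ⁻¹' (gen a • univ) = xyIdeal := by
  rw [← preimage_mul_left_smul_set (gen b) xyIdeal]
  ext u
  simp only [mem_preimage]
  constructor
  · rintro ⟨v, -, e⟩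
    exact gen_mul_mem_b_smul_xyIdeal (by decide) e.symm
  · intro hu
    rw [← smul_b_smul_xyIdeal (Or.inl rfl)] at hu
    exact smul_set_mono (subset_univ _) hu

lemma isConstructible_xyIdeal : IsConstructible T xyIdeal := by
  rw [← preimage_b_mul_a_smul_univ]
  exact .preimage _ (.mul _ .univ)

lemma isConstructible_empty : IsConstructible T ∅ := by
  have : (gen (x 0) * ·) ⁻¹' (gen b • univ) = ∅ := by
    refine eq_empty_of_forall_notMem ?_
    rintro u ⟨v, -, e⟩
    exact gen_mul_ne_b_mul (.x 0) u v e.symm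
  rw [← this]
  exact .preimage _ (.mul _ .univ)

lemma rIdeal_eq_smul_univ (t : T) : rIdeal t = t • univ := by
  ext
  simp [rIdeal, mem_smul_set, eq_comm]

lemma smul_xyIdeal (t : T) :
    t • xyIdeal =
      (⋃ n : ℤ, rIdeal (t * gen (.x n))) ∪ ⋃ n : ℤ, rIdeal (t * gen (.y n)) := by
  ext m
  simp only [xyIdeal, rIdeal, mem_smul_set, mem_union, mem_iUnion, mem_ofPred_eq, smul_eq_mul]
  constructor
  · rintro ⟨_, ⟨z, u, hz, rfl⟩, rfl⟩
    cases hz with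
    | x n => exact Or.inl ⟨n, u, (mul_assoc _ _ _).symm⟩
    | y n => exact Or.inr ⟨n, u, (mul_assoc _ _ _).symm⟩
  · rintro (⟨n, u, rfl⟩ | ⟨n, u, rfl⟩)
    · exact ⟨_, ⟨_, u, .x n, rfl⟩, (mul_assoc _ _ _).symm⟩
    · exact ⟨_, ⟨_, u, .y n, rfl⟩, (mul_assoc _ _ _).symm⟩

end T

/-- The constructible right ideals of `T` are exactly `∅`, the principal right ideals `tT`,
and the ideals `⋃ₙ t xₙ T ∪ ⋃ₙ t yₙ T` for `t ∈ T`. -/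
theorem T_constructible_ideals (X : Set T) :
    IsConstructible T X ↔
      X = ∅ ∨ (∃ t : T, X = rIdeal t) ∨
        ∃ t : T, X = (⋃ n : ℤ, rIdeal (t * gen (.x n))) ∪ ⋃ n : ℤ, rIdeal (t * gen (.y n)) := by
  constructor
  · intro hX
    rcases (T.isStdIdeal_of_isConstructible hX).eq_empty_or_exists with h | ⟨t, h | h⟩
    · exact Or.inl h
    · exact Or.inr (Or.inl ⟨t, h.trans (T.rIdeal_eq_smul_univ t).symm⟩)
    · exact Or.inr (Or.inr ⟨t, h.trans (T.smul_xyIdeal t)⟩)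
  · rintro (rfl | ⟨t, rfl⟩ | ⟨t, rfl⟩)
    · exact T.isConstructible_empty
    · rw [T.rIdeal_eq_smul_univ]
      exact .mul t .univ
    · rw [← T.smul_xyIdeal]
      exact .mul t T.isConstructible_xyIdeal
end

section
/- For every n ∈ ℤ, a word w in the free monoid on the alphabet B represents the element b·x_n of T if and only if w = u b x_m for some integer m and some word u consisting only of the letters a and c in which the number of occurrences of the letter c equals n − m. -/
/-!
`T` acts on the states of an automaton that reads a word from right to left: `x m` takes `start`
to `sawX m`, then `b` takes it to `accept m`, after which `a` fixes `accept k` and `c` takes it to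
`accept (k + 1)`; every other move rejects. The defining relations hold in this action, so a word
equal to `b·xₙ` in `T` drives `start` to `accept n`, as `b·xₙ` does, and this forces the shape
`u b xₘ` with `|u|_c = n - m`. Conversely, the relations `a b xₖ = b xₖ` and `c b xₖ = b xₖ₊₁`
absorb the letters of `u` into the index one at a time.
-/

namespace T

inductive ReadState : Type
  | start
  | sawX (k : ℤ)
  | accept (k : ℤ)
  | reject

def step : TGen → Function.End ReadState
  | .a, .accept k => .accept k
  | .c, .accept k => .accept (k + 1)
  | .b, .sawX k => .accept k
  | .x k, .start => .sawX k
  | _, _ => .reject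

theorem lift_step_eq_of_rel {v v' : FreeMonoid TGen} (h : TRel v v') :
    FreeMonoid.lift step v = FreeMonoid.lift step v' := by
  cases h <;> funext s <;> cases s <;> rfl

def action : T →* Function.End ReadState :=
  PresentedMonoid.lift step fun _ _ => lift_step_eq_of_rel

def run (l : List TGen) (s : ReadState) : ReadState :=
  FreeMonoid.lift step (.ofList l) s

theorem run_cons (g : TGen) (l : List TGen) (s : ReadState) :
    run (g :: l) s = step g (run l s) := by
  rw [run, FreeMonoid.ofList_cons, map_mul]
  rfl

theorem action_mk_apply (w : FreeMonoid TGen) (s : ReadState) :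
    action (PresentedMonoid.mk TRel w) s = run w.toList s :=
  rfl

theorem step_ne_start (g : TGen) (s : ReadState) : step g s ≠ .start := by
  cases g <;> cases s <;> simp [step]

theorem eq_singleton_of_run_start_eq_sawX {l : List TGen} {k : ℤ}
    (h : run l .start = .sawX k) : l = [.x k] := by
  rcases l with _ | ⟨g, l⟩
  · cases h
  rw [run_cons] at h
  cases g <;> cases hs : run l .start <;> simp only [hs, step, reduceCtorEq] at h
  rcases l with _ | ⟨g', l⟩
  · simp_all
  · exact absurd hs (run_cons g' l _ ▸ step_ne_start _ _)

theorem exists_of_run_start_eq_accept {l : List TGen} {n : ℤ}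
    (h : run l .start = .accept n) :
    ∃ (m : ℤ) (u : List TGen), l = u ++ [.b, .x m] ∧
      (∀ g ∈ u, g = .a ∨ g = .c) ∧ (u.count .c : ℤ) = n - m := by
  induction l generalizing n with
  | nil => cases h
  | cons g l ih =>
    rw [run_cons] at h
    cases g <;> cases hs : run l .start <;>
      simp only [hs, step, reduceCtorEq, ReadState.accept.injEq] at h <;> subst h
    case a.accept =>
      obtain ⟨m, u, rfl, hu, hc⟩ := ih hs
      exact ⟨m, .a :: u, rfl, by simpa using hu, by simpa using hc⟩
    case c.accept k =>
      obtain ⟨m, u, rfl, hu, hc⟩ := ih hs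
      refine ⟨m, .c :: u, rfl, by simpa using hu, ?_⟩
      rw [List.count_cons_self]
      push_cast
      omega
    case b.sawX k =>
      exact ⟨k, [], by rw [eq_singleton_of_run_start_eq_sawX hs]; rfl, by simp, by simp⟩

theorem gen_a_mul_b_x (k : ℤ) : gen .a * (gen .b * gen (.x k)) = gen .b * gen (.x k) := by
  have h := PresentedMonoid.mk_eq_mk_of_rel (TRel.axr k)
  rwa [map_mul, map_mul, mul_assoc] at h

theorem gen_c_mul_b_x (k : ℤ) : gen .c * (gen .b * gen (.x k)) = gen .b * gen (.x (k + 1)) := by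
  have h := PresentedMonoid.mk_eq_mk_of_rel (TRel.cxr k)
  rwa [map_mul, map_mul, mul_assoc] at h

theorem mk_ofList_mul_b_x {u : List TGen} (hu : ∀ g ∈ u, g = .a ∨ g = .c) (m : ℤ) :
    PresentedMonoid.mk TRel (.ofList u) * (gen .b * gen (.x m)) =
      gen .b * gen (.x (m + u.count .c)) := by
  induction u with
  | nil => simp
  | cons g u ih =>
    rw [FreeMonoid.ofList_cons, map_mul, mul_assoc, ih fun g hg => hu g (.tail _ hg)]
    rcases hu g (.head _) with rfl | rfl
    · exact gen_a_mul_b_x _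
    · rw [List.count_cons_self, Nat.cast_succ, ← add_assoc]
      exact gen_c_mul_b_x _

end T

/-- A word `w` in the free monoid on the alphabet represents `b·xₙ` in `T` if and only if
`w = u b xₘ` for some `m ∈ ℤ` and some word `u` consisting only of the letters `a` and `c`
in which the number of occurrences of `c` equals `n - m`. -/
theorem T_words_for_bx (n : ℤ) (w : FreeMonoid TGen) :
    PresentedMonoid.mk TRel w = gen .b * gen (.x n) ↔
      ∃ (m : ℤ) (u : FreeMonoid TGen),
        w = u * FreeMonoid.of TGen.b * FreeMonoid.of (TGen.x m) ∧
        (∀ l ∈ u.toList, l = TGen.a ∨ l = TGen.c) ∧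
        (u.toList.count TGen.c : ℤ) = n - m := by
  constructor
  · intro h
    have hrun : T.run w.toList .start = .accept n := by
      rw [← T.action_mk_apply, h]
      rfl
    obtain ⟨m, u, hw, hu, hc⟩ := T.exists_of_run_start_eq_accept hrun
    refine ⟨m, .ofList u, ?_, hu, hc⟩
    rw [← FreeMonoid.ofList_toList w, hw, FreeMonoid.ofList_append, mul_assoc]
    rfl
  · rintro ⟨m, u, rfl, hu, hc⟩
    have key := T.mk_ofList_mul_b_x hu m
    rw [show m + _ = n by omega] at key
    rwa [map_mul, map_mul, mul_assoc]
end

section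
/- For every n ∈ ℤ, a word w in the free monoid on the alphabet B represents the element b·y_n of T if and only if w = u b y_m for some integer m and some word u consisting only of the letters a and c in which the number of occurrences of the letter a equals n − m. -/
theorem PresentedMonoid.mk_mul_eq_mk_mul_of_rel {α : Type*} {rels : FreeMonoid α → FreeMonoid α → Prop}
    {r r' : FreeMonoid α} (h : rels r r') (w : FreeMonoid α) :
    mk rels (r * w) = mk rels (r' * w) := by
  rw [map_mul, map_mul, mk_eq_mk_of_rel h]

namespace TGen

open PresentedMonoid (mk)

def push : TGen → List TGen → List TGen
  | a, b :: x n :: s => b :: x n :: s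
  | a, b :: y n :: s => b :: y (n + 1) :: s
  | c, b :: x n :: s => b :: x (n + 1) :: s
  | c, b :: y n :: s => b :: y n :: s
  | g, s => g :: s

def pushAction : T →* Function.End (List TGen) :=
  PresentedMonoid.lift (M := Function.End (List TGen)) push fun _ _ h => by cases h <;> rfl

def normalize (w : FreeMonoid TGen) : List TGen := w.toList.foldr push []

lemma pushAction_mk (w : FreeMonoid TGen) (s : List TGen) :
    pushAction (mk TRel w) s = w.toList.foldr push s := by
  induction w using FreeMonoid.inductionOn' with
  | one => rfl
  | of_mul g w ih =>
    rw [map_mul, map_mul, Function.End.mul_def]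
    exact congrArg (push g) ih

lemma mk_ofList_push (g : TGen) (s : List TGen) :
    mk TRel (.ofList (push g s)) = mk TRel (.of g * .ofList s) := by
  unfold push
  split
  · exact (PresentedMonoid.mk_mul_eq_mk_mul_of_rel (TRel.axr _) _).symm
  · exact (PresentedMonoid.mk_mul_eq_mk_mul_of_rel (TRel.ayr _) _).symm
  · exact (PresentedMonoid.mk_mul_eq_mk_mul_of_rel (TRel.cxr _) _).symm
  · exact (PresentedMonoid.mk_mul_eq_mk_mul_of_rel (TRel.cyr _) _).symm
  · rfl

lemma mk_ofList_foldr_push (l s : List TGen) :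
    mk TRel (.ofList (l.foldr push s)) = mk TRel (.ofList l * .ofList s) := by
  induction l with
  | nil => rw [FreeMonoid.ofList_nil, one_mul]; rfl
  | cons g l ih =>
    rw [List.foldr_cons, mk_ofList_push, map_mul, ih, ← map_mul, FreeMonoid.ofList_cons, mul_assoc]

lemma mk_ofList_normalize (w : FreeMonoid TGen) : mk TRel (.ofList (normalize w)) = mk TRel w := by
  simpa [normalize] using mk_ofList_foldr_push w.toList []

theorem mk_eq_mk_iff_normalize_eq {w w' : FreeMonoid TGen} :
    mk TRel w = mk TRel w' ↔ normalize w = normalize w' := by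
  refine ⟨fun h => ?_, fun h => by rw [← mk_ofList_normalize w, h, mk_ofList_normalize]⟩
  simpa only [normalize, pushAction_mk] using congrArg (pushAction · []) h

lemma normalize_of_mul (g : TGen) (w : FreeMonoid TGen) :
    normalize (.of g * w) = push g (normalize w) := rfl

lemma normalize_mul (u v : FreeMonoid TGen) :
    normalize (u * v) = u.toList.foldr push (normalize v) :=
  List.foldr_append

lemma push_ne_nil (g : TGen) (s : List TGen) : push g s ≠ [] := by
  unfold push; split <;> simp

lemma eq_of_push_eq_y {g : TGen} {s : List TGen} {n : ℤ} (h : push g s = [y n]) :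
    g = y n ∧ s = [] := by
  unfold push at h; split at h <;> simp_all

lemma of_push_eq_b_y {g : TGen} {s : List TGen} {n : ℤ} (h : push g s = [b, y n]) :
    (g = a ∧ s = [b, y (n - 1)]) ∨ (g = c ∧ s = [b, y n]) ∨ (g = b ∧ s = [y n]) := by
  unfold push at h; split at h <;> simp_all; omega

lemma normalize_eq_nil {w : FreeMonoid TGen} : normalize w = [] ↔ w = 1 := by
  induction w using FreeMonoid.inductionOn' with
  | one => exact iff_of_true rfl rfl
  | of_mul g w _ => simp [normalize_of_mul, push_ne_nil]

lemma eq_of_normalize_eq_y {w : FreeMonoid TGen} {n : ℤ} (h : normalize w = [y n]) :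
    w = .of (y n) := by
  induction w using FreeMonoid.inductionOn' with
  | one => cases h
  | of_mul g w _ =>
    obtain ⟨rfl, hw⟩ := eq_of_push_eq_y h
    rw [normalize_eq_nil.1 hw, mul_one]

lemma foldr_push_b_y {u : List TGen} (hu : ∀ l ∈ u, l = a ∨ l = c) (m : ℤ) :
    u.foldr push [b, y m] = [b, y (m + u.count a)] := by
  induction u with
  | nil => simp
  | cons g u ih =>
    rw [List.foldr_cons, ih fun l hl => hu l (List.mem_cons_of_mem g hl)]
    rcases hu g List.mem_cons_self with rfl | rfl
    · simp [push, add_assoc]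
    · simp [push]

theorem normalize_eq_b_y_iff {w : FreeMonoid TGen} {n : ℤ} :
    normalize w = [b, y n] ↔ ∃ (m : ℤ) (u : FreeMonoid TGen), w = u * .of b * .of (y m) ∧
      (∀ l ∈ u.toList, l = a ∨ l = c) ∧ (u.toList.count a : ℤ) = n - m := by
  constructor
  · induction w using FreeMonoid.inductionOn' generalizing n with
    | one => intro h; cases h
    | of_mul g w ih =>
      intro h
      rcases of_push_eq_b_y h with ⟨rfl, hw⟩ | ⟨rfl, hw⟩ | ⟨rfl, hw⟩
      · obtain ⟨m, u, rfl, hu, hc⟩ := ih hw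
        refine ⟨m, .of a * u, by simp only [mul_assoc], ?_, ?_⟩
        · simpa using hu
        · simp only [FreeMonoid.toList_of_mul, List.count_cons_self, Nat.cast_add, Nat.cast_one]
          omega
      · obtain ⟨m, u, rfl, hu, hc⟩ := ih hw
        refine ⟨m, .of c * u, by simp only [mul_assoc], ?_, ?_⟩
        · simpa using hu
        · simpa using hc
      · exact ⟨n, 1, by rw [eq_of_normalize_eq_y hw, one_mul], by simp, by simp⟩
  · rintro ⟨m, u, rfl, hu, hc⟩
    rw [mul_assoc, normalize_mul, show normalize (.of b * .of (y m)) = [b, y m] from rfl,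
      foldr_push_b_y hu]
    congr
    omega

end TGen

/-- A word `w` in the free monoid on the alphabet represents `b·yₙ` in `T` if and only if
`w = u b yₘ` for some `m ∈ ℤ` and some word `u` consisting only of the letters `a` and `c`
in which the number of occurrences of `a` equals `n - m`. -/
theorem T_words_for_by (n : ℤ) (w : FreeMonoid TGen) :
    PresentedMonoid.mk TRel w = gen .b * gen (.y n) ↔
      ∃ (m : ℤ) (u : FreeMonoid TGen),
        w = u * FreeMonoid.of TGen.b * FreeMonoid.of (TGen.y m) ∧
        (∀ l ∈ u.toList, l = TGen.a ∨ l = TGen.c) ∧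
        (u.toList.count TGen.a : ℤ) = n - m := by
  have hby : gen .b * gen (.y n) = PresentedMonoid.mk TRel (.of .b * .of (.y n)) :=
    (map_mul _ _ _).symm
  rw [hby, TGen.mk_eq_mk_iff_normalize_eq]
  exact TGen.normalize_eq_b_y_iff
end

section
/- Every element s of the set X = ⋃_{n ∈ ℤ} b·x_n·T ∪ ⋃_{n ∈ ℤ} b·y_n·T in the monoid T satisfies: either c·s = s, or both a·s = s and a·c·s = c·s. (Consequently the operator identity (λ_a − 1)(λ_c − 1)𝟙_X = 0 holds on ℓ²(T), where λ_t δ_s = δ_{ts}.) -/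
lemma Trel_eq {u v : FreeMonoid TGen} (h : TRel u v) :
    PresentedMonoid.mk TRel u = PresentedMonoid.mk TRel v :=
  Quotient.sound (ConGen.Rel.of _ _ h)

lemma gen_rel {g₁ g₂ g₃ g₄ g₅ : TGen}
    (h : TRel (.of g₁ * .of g₂ * .of g₃) (.of g₄ * .of g₅)) (t : T) :
    gen g₁ * (gen g₂ * gen g₃ * t) = gen g₄ * gen g₅ * t := by
  have := Trel_eq h
  simp only [gen, PresentedMonoid.of, map_mul] at this ⊢
  rw [← mul_assoc, ← mul_assoc, this]

/-- Every element `s` of `X = ⋃ₙ b xₙ T ∪ ⋃ₙ b yₙ T` satisfies: either `c·s = s`, or both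
`a·s = s` and `a·c·s = c·s` (whence the operator identity `(λ_a - 1)(λ_c - 1)𝟙_X = 0`
on `ℓ²(T)`). -/
theorem T_fixed_points_on_X (s : T)
    (hs : s ∈ (⋃ n : ℤ, rIdeal (gen .b * gen (.x n))) ∪ ⋃ n : ℤ, rIdeal (gen .b * gen (.y n))) :
    gen .c * s = s ∨ (gen .a * s = s ∧ gen .a * (gen .c * s) = gen .c * s) := by
  rcases hs with h | h <;> simp only [Set.mem_iUnion, rIdeal, Set.mem_setOf_eq] at h <;>
    obtain ⟨n, u, rfl⟩ := h
  · right
    exact ⟨gen_rel (TRel.axr n) u,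
      by rw [gen_rel (TRel.cxr n) u, gen_rel (TRel.axr (n + 1)) u]⟩
  · left
    exact gen_rel (TRel.cyr n) u
end
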